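/- arXiv:1612.03486 — 3 statements merged into one kernel-verified Lean document; each statement's English description precedes it below -/
import Mathlib

section
/- The assignment π(a_{ijk}) = a_{ijk} and π(σ_{ij}) = a_{ij(n+1)} on generators extends to a well-defined group homomorphism π: \widetilde{G}_n^3 → G_{n+1}^3, i.e., every defining relator of \widetilde{G}_n^3 is sent to the identity of G_{n+1}^3. -/
/-- Index type for the generators `a_{ijk}` of `G_n^3`: 3-element subsets of `Fin n`. -/
abbrev TripleIndex (n : ℕ) := {s : Finset (Fin n) // s.card = 3}

/-- Index type for the generators `b_{ij}` (with `i < j`) of the pure braid group. -/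
abbrev PBGen (n : ℕ) := {p : Fin n × Fin n // p.1 < p.2}

/-- Index type for the generators `σ_{ij}` (ordered pairs of distinct indices). -/
abbrev SGen (n : ℕ) := {p : Fin n × Fin n // p.1 ≠ p.2}

/-- Generators of the group `\widetilde{G}_n^3`. -/
abbrev TGen (n : ℕ) := TripleIndex n ⊕ SGen n

/-- `a_{ijk}` interpreted via `f`, equal to `1` when `i,j,k` are not pairwise distinct. -/
def atri {n : ℕ} {G : Type*} [Group G] (f : TripleIndex n → G) (i j k : Fin n) : G :=
  if h : ({i, j, k} : Finset (Fin n)).card = 3 then f ⟨{i, j, k}, h⟩ else 1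

/-- `σ_{ij}` interpreted via `f`, equal to `1` when `i = j`. -/
def sgen {n : ℕ} {G : Type*} [Group G] (f : SGen n → G) (i j : Fin n) : G :=
  if h : i ≠ j then f ⟨(i, j), h⟩ else 1

/-- `b_{ij}` interpreted via `f`, equal to `1` unless `i < j`. -/
def bgen {n : ℕ} {G : Type*} [Group G] (f : PBGen n → G) (i j : Fin n) : G :=
  if h : i < j then f ⟨(i, j), h⟩ else 1

/-- The letter `b_{ij}` in the free group on the pure braid generators. -/
def pbB {n : ℕ} (i j : Fin n) : FreeGroup (PBGen n) := bgen FreeGroup.of i j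

/-- The letter `a_{ijk}` in the free group on the generators of `G_n^3`. -/
def frA {n : ℕ} (i j k : Fin n) : FreeGroup (TripleIndex n) := atri FreeGroup.of i j k

/-- The letter `a_{ijk}` in the free group on the generators of `\widetilde{G}_n^3`. -/
def tA {n : ℕ} (i j k : Fin n) : FreeGroup (TGen n) :=
  atri (fun t => FreeGroup.of (Sum.inl t)) i j k

/-- The letter `σ_{ij}` in the free group on the generators of `\widetilde{G}_n^3`. -/
def tS {n : ℕ} (i j : Fin n) : FreeGroup (TGen n) :=
  sgen (fun p => FreeGroup.of (Sum.inr p)) i j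

/-- The defining relators of the pure braid group `PB_n`
(Cohen–Falk–Randell presentation), written as relators `LHS * RHS⁻¹`. -/
def PBRels (n : ℕ) : Set (FreeGroup (PBGen n)) :=
  { x | ∃ i j r s : Fin n, i < j ∧ r < s ∧
      (((s < i ∨ j < r) ∧
          x = pbB r s * pbB i j * (pbB r s)⁻¹ * (pbB i j)⁻¹) ∨
        ((j = r) ∧
          x = pbB r s * pbB i j * (pbB r s)⁻¹ * ((pbB i s)⁻¹ * pbB i j * pbB i s)⁻¹) ∨
        ((i < r ∧ j = s) ∧
          x = pbB r s * pbB i j * (pbB r s)⁻¹ *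
            ((pbB i j)⁻¹ * (pbB i r)⁻¹ * pbB i j * pbB i r * pbB i j)⁻¹) ∨
        ((i < r ∧ r < j ∧ j < s) ∧
          x = pbB r s * pbB i j * (pbB r s)⁻¹ *
            ((pbB i s)⁻¹ * (pbB i r)⁻¹ * pbB i s * pbB i r * pbB i j *
              (pbB i r)⁻¹ * (pbB i s)⁻¹ * pbB i r * pbB i s)⁻¹)) }

/-- The pure braid group on `n` strands, via its standard presentation. -/
abbrev PBn (n : ℕ) := PresentedGroup (PBRels n)

/-- The defining relators of `G_n^3`. -/
def Gn3Rels (n : ℕ) : Set (FreeGroup (TripleIndex n)) :=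
  { x | (∃ t : TripleIndex n, x = FreeGroup.of t * FreeGroup.of t) ∨
      (∃ t u : TripleIndex n, (t.1 ∩ u.1).card ≤ 1 ∧
        x = FreeGroup.of t * FreeGroup.of u * (FreeGroup.of u * FreeGroup.of t)⁻¹) ∨
      (∃ i j k l : Fin n, [i, j, k, l].Nodup ∧
        x = frA i j k * frA i j l * frA i k l * frA j k l *
          (frA j k l * frA i k l * frA i j l * frA i j k)⁻¹) }

/-- The group `G_n^3`. -/
abbrev Gn3 (n : ℕ) := PresentedGroup (Gn3Rels n)

/-- The defining relators of `\widetilde{G}_n^3`, relations (a)–(i). -/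
def TGn3Rels (n : ℕ) : Set (FreeGroup (TGen n)) :=
  { x | (∃ t : TripleIndex n,
          x = FreeGroup.of (Sum.inl t) * FreeGroup.of (Sum.inl t)) ∨
      (∃ t u : TripleIndex n, (t.1 ∩ u.1).card ≤ 1 ∧
          x = FreeGroup.of (Sum.inl t) * FreeGroup.of (Sum.inl u) *
            (FreeGroup.of (Sum.inl u) * FreeGroup.of (Sum.inl t))⁻¹) ∨
      (∃ i j k l : Fin n, [i, j, k, l].Nodup ∧
          x = tA i j k * tA i j l * tA i k l * tA j k l *
            (tA j k l * tA i k l * tA i j l * tA i j k)⁻¹) ∨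
      (∃ i j k l : Fin n, [i, j, k, l].Nodup ∧
          x = tS i j * tS k l * (tS k l * tS i j)⁻¹) ∨
      (∃ (i j : Fin n) (u : TripleIndex n), i ≠ j ∧
          (({i, j} : Finset (Fin n)) ∩ u.1).card ≤ 1 ∧
          x = tS i j * FreeGroup.of (Sum.inl u) *
            (FreeGroup.of (Sum.inl u) * tS i j)⁻¹) ∨
      (∃ i j k : Fin n, [i, j, k].Nodup ∧
          (x = tA i j k * tS i j * tS i k * tS j k *
              (tS j k * tS i k * tS i j * tA i j k)⁻¹ ∨
            x = tS i j * tA i j k * tS i k * tS j k *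
              (tS j k * tS i k * tA i j k * tS i j)⁻¹ ∨
            x = tS i j * tS i k * tA i j k * tS j k *
              (tS j k * tA i j k * tS i k * tS i j)⁻¹ ∨
            x = tS i j * tS i k * tS j k * tA i j k *
              (tA i j k * tS j k * tS i k * tS i j)⁻¹)) }

/-- The group `\widetilde{G}_n^3`. -/
abbrev TGn3 (n : ℕ) := PresentedGroup (TGn3Rels n)

/-- Ordered product of `f l` over all `l > k`, in increasing order of `l`. -/
def listUp {n : ℕ} {G : Type*} [Group G] (f : Fin n → G) (k : Fin n) : G :=
  (((List.finRange n).filter fun l => decide (k < l)).map f).prod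

/-- Ordered product of `f l` over all `l < k`, in increasing order of `l`. -/
def listLow {n : ℕ} {G : Type*} [Group G] (f : Fin n → G) (k : Fin n) : G :=
  (((List.finRange n).filter fun l => decide (l < k)).map f).prod

/-- The word `c_{i,k} = (∏_{l=k+1}^{n} a_{ikl}) (∏_{l=1}^{k-1} a_{ikl})`
(degenerate letters give `1`, so the products effectively omit `l ∈ {i,k}`). -/
def cPhi {n : ℕ} {G : Type*} [Group G] (f : TripleIndex n → G) (i k : Fin n) : G :=
  listUp (fun l => atri f i k l) k * listLow (fun l => atri f i k l) k

/-- The word `φ(b_{ij}) = c_{i,i+1}⁻¹ ⋯ c_{i,j-1}⁻¹ (c_{i,j})² c_{i,j-1} ⋯ c_{i,i+1}`. -/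
def phiWord {n : ℕ} {G : Type*} [Group G] (f : TripleIndex n → G) (i j : Fin n) : G :=
  (((List.finRange n).filter fun m => decide (i < m ∧ m < j)).map
      fun m => (cPhi f i m)⁻¹).prod *
    (cPhi f i j) ^ 2 *
    ((((List.finRange n).filter fun m => decide (i < m ∧ m < j)).map
      fun m => (cPhi f i m)⁻¹).prod)⁻¹

/-- `φ` on the generators of `PB_n`, with values in `G_n^3`. -/
def phiGen {n : ℕ} : PBGen n → Gn3 n :=
  fun p => phiWord PresentedGroup.of p.1.1 p.1.2

/-- The word `(∏_{k=m+1}^{n} a_{imk}) · σ · (∏_{k=1}^{m-1} a_{imk})` for a middle letter `σ`. -/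
def cMid {n : ℕ} {G : Type*} [Group G] (fa : TripleIndex n → G) (σmid : G) (i m : Fin n) : G :=
  listUp (fun k => atri fa i m k) m * σmid * listLow (fun k => atri fa i m k) m

/-- The word `\widetilde{φ}(b_{ij}) = c_{i,i+1}⁻¹ ⋯ c_{i,j-1}⁻¹ \bar c_{i,j} \bar c_{j,i}
c_{i,j-1} ⋯ c_{i,i+1}`, where `c_{i,m}`, `\bar c_{i,m}`, `\bar c_{j,i}` are as in the paper. -/
def tphiWord {n : ℕ} {G : Type*} [Group G] (fa : TripleIndex n → G) (fs : SGen n → G)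
    (i j : Fin n) : G :=
  (((List.finRange n).filter fun m => decide (i < m ∧ m < j)).map
      fun m => (cMid fa (sgen fs i m)⁻¹ i m)⁻¹).prod *
    cMid fa (sgen fs i j) i j * cMid fa (sgen fs j i) i j *
    ((((List.finRange n).filter fun m => decide (i < m ∧ m < j)).map
      fun m => (cMid fa (sgen fs i m)⁻¹ i m)⁻¹).prod)⁻¹

/-- `\widetilde{φ}` on the generators of `PB_n`, with values in `\widetilde{G}_n^3`. -/
def tphiGen {n : ℕ} : PBGen n → TGn3 n :=
  fun p => tphiWord (fun t => PresentedGroup.of (Sum.inl t))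
    (fun q => PresentedGroup.of (Sum.inr q)) p.1.1 p.1.2
/-- Index set for the free product `F_n^3`: functions from `{1,…,n} ∖ {i,j,k}` to `ℤ/2 × ℤ/2`. -/
def Fn3Idx (n : ℕ) (i j k : Fin n) : Type :=
  {l : Fin n // l ≠ i ∧ l ≠ j ∧ l ≠ k} → ZMod 2 × ZMod 2

/-- Relators of `F_n^3`: every generator is an involution. -/
def Fn3Rels (n : ℕ) (i j k : Fin n) : Set (FreeGroup (Fn3Idx n i j k)) :=
  { x | ∃ f : Fn3Idx n i j k, x = FreeGroup.of f * FreeGroup.of f }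

/-- The group `F_n^3`: the free product of copies of `ℤ/2` indexed by `Fn3Idx n i j k`. -/
abbrev Fn3 (n : ℕ) (i j k : Fin n) := PresentedGroup (Fn3Rels n i j k)

/-- The number of occurrences of the letter `a_{xyz}` in a word in the generators of `G_n^3`. -/
def cntA {n : ℕ} (L : List (TripleIndex n)) (x y z : Fin n) : ℕ :=
  L.countP fun t => decide (t.1 = ({x, y, z} : Finset (Fin n)))

/-- The index of an occurrence of `a_{ijk}` whose preceding prefix is `pre`:
`l ↦ (N_{jkl} + N_{ijl}, N_{ikl} + N_{ijl})` in `ℤ/2 × ℤ/2`. -/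
def idxOf {n : ℕ} (i j k : Fin n) (pre : List (TripleIndex n)) : Fn3Idx n i j k :=
  fun l => (((cntA pre j k l.1 + cntA pre i j l.1 : ℕ) : ZMod 2),
            ((cntA pre i k l.1 + cntA pre i j l.1 : ℕ) : ZMod 2))

/-- Auxiliary recursion computing `w_{ijk}` of a word: `pre` is the prefix read so far. -/
def wRec {n : ℕ} (i j k : Fin n) :
    List (TripleIndex n) → List (TripleIndex n) → Fn3 n i j k
  | _, [] => 1
  | pre, t :: rest =>
      (if t.1 = ({i, j, k} : Finset (Fin n)) then
          PresentedGroup.of (idxOf i j k pre) else 1) *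
        wRec i j k (pre ++ [t]) rest

/-- The index-counting map `w_{ijk}` on words in the generators of `G_n^3`. -/
def wWord {n : ℕ} (i j k : Fin n) (L : List (TripleIndex n)) : Fn3 n i j k :=
  wRec i j k [] L

/-- The element of `G_n^3` represented by a word in the generators. -/
def gn3Word {n : ℕ} (L : List (TripleIndex n)) : Gn3 n :=
  (L.map PresentedGroup.of).prod

/-- The inclusion of triples of `{1,…,n}` into triples of `{1,…,n+1}`. -/
def castTriple {n : ℕ} (t : TripleIndex n) : TripleIndex (n + 1) :=
  ⟨t.1.map ⟨Fin.castSucc, Fin.castSucc_injective n⟩, by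
    rw [Finset.card_map]; exact t.2⟩

/-- The triple `{i, j, n+1}` associated with `σ_{ij}`. -/
def sigTriple {n : ℕ} (p : SGen n) : TripleIndex (n + 1) :=
  ⟨{p.1.1.castSucc, p.1.2.castSucc, Fin.last n},
    Finset.card_eq_three.mpr ⟨_, _, _,
      fun h => p.2 (Fin.castSucc_injective n h),
      (Fin.castSucc_lt_last _).ne, (Fin.castSucc_lt_last _).ne, rfl⟩⟩

/-- `π` on the generators of `\widetilde{G}_n^3`: `a_{ijk} ↦ a_{ijk}`, `σ_{ij} ↦ a_{ij(n+1)}`. -/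
def piGen {n : ℕ} : TGen n → Gn3 (n + 1)
  | Sum.inl t => PresentedGroup.of (castTriple t)
  | Sum.inr p => PresentedGroup.of (sigTriple p)

namespace PiExt

/-- The embedding `Fin n ↪ Fin (n+1)`. -/
def castEmb (n : ℕ) : Fin n ↪ Fin (n + 1) := ⟨Fin.castSucc, Fin.castSucc_injective n⟩

/-- `π` on letters, as a map to the generating set of `G_{n+1}^3`. -/
def pig (n : ℕ) : TGen n → TripleIndex (n + 1) := Sum.elim castTriple sigTriple

lemma castSet {n : ℕ} (i j k : Fin n) :
    ({i.castSucc, j.castSucc, k.castSucc} : Finset (Fin (n + 1))) =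
      ({i, j, k} : Finset (Fin n)).map (castEmb n) := by
  simp [castEmb, Finset.map_insert]

lemma atri_congr {n : ℕ} {G : Type*} [Group G] (f : TripleIndex n → G)
    {i j k i' j' k' : Fin n} (h : ({i, j, k} : Finset (Fin n)) = {i', j', k'}) :
    atri f i j k = atri f i' j' k' := by
  unfold atri
  rw [h]

lemma frA_congr {m : ℕ} {i j k i' j' k' : Fin m}
    (h : ({i, j, k} : Finset (Fin m)) = {i', j', k'}) :
    frA i j k = frA i' j' k' := atri_congr _ h

lemma frA_swap23 {m : ℕ} (i j k : Fin m) : frA i j k = frA i k j :=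
  frA_congr (by rw [Finset.pair_comm j k])

lemma frA_rot {m : ℕ} (i j k : Fin m) : frA i j k = frA j k i :=
  frA_congr (by rw [Finset.insert_comm i j, Finset.pair_comm i k])

lemma frA_eq_of {m : ℕ} {i j k : Fin m} (h : ({i, j, k} : Finset (Fin m)).card = 3) :
    frA i j k = FreeGroup.of ⟨{i, j, k}, h⟩ := dif_pos h

lemma map_tA {n : ℕ} (i j k : Fin n) :
    FreeGroup.map (pig n) (tA i j k) = frA i.castSucc j.castSucc k.castSucc := by
  by_cases h : ({i, j, k} : Finset (Fin n)).card = 3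
  · have h' : ({i.castSucc, j.castSucc, k.castSucc} : Finset (Fin (n + 1))).card = 3 := by
      rw [castSet, Finset.card_map]; exact h
    rw [tA, atri, dif_pos h, FreeGroup.map.of, frA_eq_of h']
    congr 1
    exact Subtype.ext (castSet i j k).symm
  · have h' : ¬ ({i.castSucc, j.castSucc, k.castSucc} : Finset (Fin (n + 1))).card = 3 := by
      rw [castSet, Finset.card_map]; exact h
    rw [tA, atri, dif_neg h, map_one, frA, atri, dif_neg h']

lemma map_tS {n : ℕ} (i j : Fin n) :
    FreeGroup.map (pig n) (tS i j) =
      frA i.castSucc j.castSucc (Fin.last n) := by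
  by_cases h : i ≠ j
  · have h' : ({i.castSucc, j.castSucc, Fin.last n} : Finset (Fin (n + 1))).card = 3 :=
      Finset.card_eq_three.mpr ⟨_, _, _, fun hc => h (Fin.castSucc_injective n hc),
        (Fin.castSucc_lt_last _).ne, (Fin.castSucc_lt_last _).ne, rfl⟩
    rw [tS, sgen, dif_pos h, FreeGroup.map.of, frA_eq_of h']
    rfl
  · push_neg at h
    subst h
    have h' : ¬ ({i.castSucc, i.castSucc, Fin.last n} : Finset (Fin (n + 1))).card = 3 := by
      intro hc
      have he : ({i.castSucc, i.castSucc, Fin.last n} : Finset (Fin (n + 1))) =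
          {i.castSucc, Fin.last n} := by simp
      rw [he] at hc
      have h2 := Finset.card_insert_le i.castSucc ({Fin.last n} : Finset (Fin (n + 1)))
      rw [hc, Finset.card_singleton] at h2
      omega
    rw [tS, sgen, dif_neg (by simp), map_one, frA, atri, dif_neg h']

set_option maxHeartbeats 1000000 in
lemma key_mem (n : ℕ) : ∀ r ∈ TGn3Rels n, FreeGroup.map (pig n) r ∈ Gn3Rels (n + 1) := by
  have hL : ∀ x : Fin n, ¬ (x.castSucc = Fin.last n) := fun x => (Fin.castSucc_lt_last x).ne
  have hL' : ∀ x : Fin n, ¬ (Fin.last n = x.castSucc) := fun x => (Fin.castSucc_lt_last x).ne'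
  intro r hr
  rcases hr with ⟨t, rfl⟩ | ⟨t, u, hcard, rfl⟩ | ⟨i, j, k, l, hnd, rfl⟩ |
    ⟨i, j, k, l, hnd, rfl⟩ | ⟨i, j, u, hij, hcard, rfl⟩ | ⟨i, j, k, hnd, h4⟩
  · exact Or.inl ⟨castTriple t, by simp [pig]⟩
  · refine Or.inr (Or.inl ⟨castTriple t, castTriple u, ?_, by simp [pig]⟩)
    show ((t.1.map (castEmb n)) ∩ (u.1.map (castEmb n))).card ≤ 1
    rw [← Finset.map_inter, Finset.card_map]
    exact hcard
  · refine Or.inr (Or.inr ⟨i.castSucc, j.castSucc, k.castSucc, l.castSucc, ?_, ?_⟩)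
    · simpa [Fin.castSucc_inj] using hnd
    · simp only [map_mul, map_inv, map_tA]
  · -- (d): σ_{ij} σ_{kl} commute
    obtain ⟨hij, hik, hil, hjk, hjl, hkl⟩ : i≠j ∧ i≠k ∧ i≠l ∧ j≠k ∧ j≠l ∧ k≠l := by
      simpa [List.nodup_cons, not_or, and_assoc] using hnd
    have h3a : ({i.castSucc, j.castSucc, Fin.last n} : Finset (Fin (n + 1))).card = 3 :=
      Finset.card_eq_three.mpr ⟨_, _, _, fun hc => hij (Fin.castSucc_injective n hc),
        hL _, hL _, rfl⟩
    have h3b : ({k.castSucc, l.castSucc, Fin.last n} : Finset (Fin (n + 1))).card = 3 :=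
      Finset.card_eq_three.mpr ⟨_, _, _, fun hc => hkl (Fin.castSucc_injective n hc),
        hL _, hL _, rfl⟩
    refine Or.inr (Or.inl ⟨⟨_, h3a⟩, ⟨_, h3b⟩, ?_, ?_⟩)
    · have hsub : ({i.castSucc, j.castSucc, Fin.last n} : Finset (Fin (n + 1))) ∩
          {k.castSucc, l.castSucc, Fin.last n} ⊆ {Fin.last n} := by
        intro x hx
        simp only [Finset.mem_inter, Finset.mem_insert, Finset.mem_singleton] at hx ⊢
        obtain ⟨h1, h2⟩ := hx
        rcases h1 with rfl | rfl | rfl <;> rcases h2 with h2 | h2 | h2 <;>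
          first
          | rfl
          | exact absurd (Fin.castSucc_injective n h2) (by assumption)
          | exact absurd h2 (hL _)
      calc _ ≤ ({Fin.last n} : Finset (Fin (n + 1))).card := Finset.card_le_card hsub
        _ = 1 := Finset.card_singleton _
    · simp only [map_mul, map_inv, map_tS]
      rw [frA_eq_of h3a, frA_eq_of h3b]
  · -- (e): σ_{ij} commutes with a_{stu}
    have h3a : ({i.castSucc, j.castSucc, Fin.last n} : Finset (Fin (n + 1))).card = 3 :=
      Finset.card_eq_three.mpr ⟨_, _, _, fun hc => hij (Fin.castSucc_injective n hc),
        hL _, hL _, rfl⟩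
    refine Or.inr (Or.inl ⟨⟨_, h3a⟩, castTriple u, ?_, ?_⟩)
    · have hsub : ({i.castSucc, j.castSucc, Fin.last n} : Finset (Fin (n + 1))) ∩
          (castTriple u).1 ⊆ (({i, j} : Finset (Fin n)) ∩ u.1).map (castEmb n) := by
        intro x hx
        simp only [Finset.mem_inter, Finset.mem_insert, Finset.mem_singleton] at hx
        obtain ⟨h1, h2⟩ := hx
        obtain ⟨y, hy, rfl⟩ := Finset.mem_map.mp h2
        rw [Finset.mem_map]
        refine ⟨y, ?_, rfl⟩
        rw [Finset.mem_inter]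
        refine ⟨?_, hy⟩
        simp only [Finset.mem_insert, Finset.mem_singleton]
        rcases h1 with h1 | h1 | h1
        · exact Or.inl (Fin.castSucc_injective n h1)
        · exact Or.inr (Fin.castSucc_injective n h1)
        · exact absurd h1 (hL _)
      calc _ ≤ ((({i, j} : Finset (Fin n)) ∩ u.1).map (castEmb n)).card :=
            Finset.card_le_card hsub
        _ = (({i, j} : Finset (Fin n)) ∩ u.1).card := Finset.card_map _
        _ ≤ 1 := hcard
    · simp only [map_mul, map_inv, map_tS, FreeGroup.map.of]
      rw [frA_eq_of h3a]
      rfl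
  · -- (f)-(i)
    obtain ⟨hij, hik, hjk⟩ : i≠j ∧ i≠k ∧ j≠k := by
      simpa [List.nodup_cons, not_or, and_assoc] using hnd
    have e1 : frA i.castSucc (Fin.last n) j.castSucc =
        frA i.castSucc j.castSucc (Fin.last n) :=
      frA_congr (by rw [Finset.pair_comm (Fin.last n) j.castSucc])
    have e2 : frA i.castSucc (Fin.last n) k.castSucc =
        frA i.castSucc k.castSucc (Fin.last n) :=
      frA_congr (by rw [Finset.pair_comm (Fin.last n) k.castSucc])
    have e3 : frA j.castSucc (Fin.last n) k.castSucc =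
        frA j.castSucc k.castSucc (Fin.last n) :=
      frA_congr (by rw [Finset.pair_comm (Fin.last n) k.castSucc])
    have e4 : frA (Fin.last n) i.castSucc j.castSucc =
        frA i.castSucc j.castSucc (Fin.last n) :=
      frA_congr (by
        rw [Finset.insert_comm (Fin.last n) i.castSucc,
          Finset.pair_comm (Fin.last n) j.castSucc])
    have e5 : frA (Fin.last n) i.castSucc k.castSucc =
        frA i.castSucc k.castSucc (Fin.last n) :=
      frA_congr (by
        rw [Finset.insert_comm (Fin.last n) i.castSucc,
          Finset.pair_comm (Fin.last n) k.castSucc])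
    have e6 : frA (Fin.last n) j.castSucc k.castSucc =
        frA j.castSucc k.castSucc (Fin.last n) :=
      frA_congr (by
        rw [Finset.insert_comm (Fin.last n) j.castSucc,
          Finset.pair_comm (Fin.last n) k.castSucc])
    rcases h4 with rfl | rfl | rfl | rfl
    · refine Or.inr (Or.inr ⟨i.castSucc, j.castSucc, k.castSucc, Fin.last n, ?_, ?_⟩)
      · simp [List.nodup_cons, Fin.castSucc_inj, hij, hik, hjk, hL, hL']
      · simp only [map_mul, map_inv, map_tA, map_tS]
    · refine Or.inr (Or.inr ⟨i.castSucc, j.castSucc, Fin.last n, k.castSucc, ?_, ?_⟩)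
      · simp [List.nodup_cons, Fin.castSucc_inj, hij, hik, hjk, hL, hL']
      · simp only [map_mul, map_inv, map_tA, map_tS]
        rw [e2, e3]
    · refine Or.inr (Or.inr ⟨i.castSucc, Fin.last n, j.castSucc, k.castSucc, ?_, ?_⟩)
      · simp [List.nodup_cons, Fin.castSucc_inj, hij, hik, hjk, hL, hL']
      · simp only [map_mul, map_inv, map_tA, map_tS]
        rw [e1, e2, e6]
    · refine Or.inr (Or.inr ⟨Fin.last n, i.castSucc, j.castSucc, k.castSucc, ?_, ?_⟩)
      · simp [List.nodup_cons, Fin.castSucc_inj, hij, hik, hjk, hL, hL']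
      · simp only [map_mul, map_inv, map_tA, map_tS]
        rw [e4, e5, e6]

end PiExt

/-- `π(a_{ijk}) = a_{ijk}`, `π(σ_{ij}) = a_{ij(n+1)}` sends every defining
relator of `\widetilde{G}_n^3` to the identity of `G_{n+1}^3`, so it extends to a homomorphism
`π : \widetilde{G}_n^3 → G_{n+1}^3`. -/
theorem pi_extends_to_hom (n : ℕ) :
    ∀ r ∈ TGn3Rels n, FreeGroup.lift (piGen (n := n)) r = 1 := by
  intro r hr
  have hcomp : (FreeGroup.lift (piGen (n := n))) =
      (QuotientGroup.mk' (Subgroup.normalClosure (Gn3Rels (n + 1)))).comp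
        (FreeGroup.map (PiExt.pig n)) := by
    ext x
    cases x <;> rfl
  rw [hcomp]
  exact (QuotientGroup.eq_one_iff _).mpr
    (Subgroup.subset_normalClosure (PiExt.key_mem n r hr))
end

section
/- For every 3-element subset {i,j,k} of {1,…,n} and every β ∈ PB_n, one has \widetilde{w}_{ijk}(\widetilde{φ}(β)) = \widetilde{w}_{ijk}(\widetilde{φ}(f_{ijk}(β))), where f_{ijk}: PB_n → PB_n is the endomorphism sending b_{st} to b_{st} if |{s,t} ∩ {i,j,k}| = 2 and to 1 otherwise. -/
/-- `f_{ijk}` on generators: `b_{st} ↦ b_{st}` if `|{s,t} ∩ {i,j,k}| = 2`, else `b_{st} ↦ 1`. -/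
def fijkGen {n : ℕ} (i j k : Fin n) : PBGen n → PBn n :=
  fun p => if (({p.1.1, p.1.2} : Finset (Fin n)) ∩ {i, j, k}).card = 2
    then PresentedGroup.of p else 1

section MapLemmas

variable {n : ℕ} {G H : Type*} [Group G] [Group H] (g : G →* H)

lemma map_atri (fa : TripleIndex n → G) (i j k : Fin n) :
    g (atri fa i j k) = atri (g ∘ fa) i j k := by
  unfold atri; split <;> simp

lemma map_sgen (fs : SGen n → G) (i j : Fin n) :
    g (sgen fs i j) = sgen (g ∘ fs) i j := by
  unfold sgen; split <;> simp

lemma map_listUp (f : Fin n → G) (m : Fin n) :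
    g (listUp f m) = listUp (g ∘ f) m := by
  unfold listUp; rw [map_list_prod, List.map_map]

lemma map_listLow (f : Fin n → G) (m : Fin n) :
    g (listLow f m) = listLow (g ∘ f) m := by
  unfold listLow; rw [map_list_prod, List.map_map]

lemma listUp_congr {f f' : Fin n → G} (h : ∀ l, f l = f' l) (m : Fin n) :
    listUp f m = listUp f' m := by
  unfold listUp; congr 1; exact List.map_congr_left (fun l _ => h l)

lemma listLow_congr {f f' : Fin n → G} (h : ∀ l, f l = f' l) (m : Fin n) :
    listLow f m = listLow f' m := by
  unfold listLow; congr 1; exact List.map_congr_left (fun l _ => h l)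

lemma map_cMid (fa : TripleIndex n → G) (σ : G) (i m : Fin n) :
    g (cMid fa σ i m) = cMid (g ∘ fa) (g σ) i m := by
  unfold cMid
  rw [map_mul, map_mul, map_listUp, map_listLow]
  simp only [Function.comp_def]
  rw [listUp_congr (fun l => map_atri g fa i m l) m,
    listLow_congr (fun l => map_atri g fa i m l) m]
  rfl

lemma map_tphiWord (fa : TripleIndex n → G) (fs : SGen n → G) (i j : Fin n) :
    g (tphiWord fa fs i j) = tphiWord (g ∘ fa) (g ∘ fs) i j := by
  unfold tphiWord
  have hP : (((List.finRange n).filter fun m => decide (i < m ∧ m < j)).map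
      fun m => (cMid fa (sgen fs i m)⁻¹ i m)⁻¹).map g =
      ((List.finRange n).filter fun m => decide (i < m ∧ m < j)).map
      fun m => (cMid (g ∘ fa) (sgen (g ∘ fs) i m)⁻¹ i m)⁻¹ := by
    rw [List.map_map]
    refine List.map_congr_left (fun m _ => ?_)
    simp only [Function.comp_apply, map_inv, map_cMid, map_sgen]
  rw [map_mul, map_mul, map_mul, map_inv, map_list_prod, hP,
    map_cMid, map_cMid, map_sgen, map_sgen]

lemma listUp_eq_one {f : Fin n → G} (h : ∀ l, f l = 1) (m : Fin n) :
    listUp f m = 1 := by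
  unfold listUp
  refine List.prod_eq_one (fun x hx => ?_)
  obtain ⟨l, -, rfl⟩ := List.mem_map.mp hx
  exact h l

lemma listLow_eq_one {f : Fin n → G} (h : ∀ l, f l = 1) (m : Fin n) :
    listLow f m = 1 := by
  unfold listLow
  refine List.prod_eq_one (fun x hx => ?_)
  obtain ⟨l, -, rfl⟩ := List.mem_map.mp hx
  exact h l

end MapLemmas

/-- For every `β ∈ PB_n`,
`\widetilde{w}_{ijk}(\widetilde{φ}(β)) = \widetilde{w}_{ijk}(\widetilde{φ}(f_{ijk}(β)))`,
where `\widetilde{w}_{ijk} = w_{ijk} ∘ π`. -/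
theorem wtilde_phi_eq_on_fijk (n : ℕ) (i j k : Fin n)
    (hij : i ≠ j) (hik : i ≠ k) (hjk : j ≠ k)
    (φt : PBn n →* TGn3 n) (hφt : ∀ p : PBGen n, φt (PresentedGroup.of p) = tphiGen p)
    (f : PBn n →* PBn n) (hf : ∀ p : PBGen n, f (PresentedGroup.of p) = fijkGen i j k p)
    (π : TGn3 n →* Gn3 (n + 1)) (hπ : ∀ g : TGen n, π (PresentedGroup.of g) = piGen g)
    (w : Gn3 (n + 1) →* Fn3 (n + 1) i.castSucc j.castSucc k.castSucc)
    (hw : ∀ L : List (TripleIndex (n + 1)),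
      w (gn3Word L) = wWord i.castSucc j.castSucc k.castSucc L)
    (β : PBn n) :
    w (π (φt β)) = w (π (φt (f β))) := by
  classical
  -- `w` kills any generator whose triple differs from `{i', j', k'}`
  have hwof : ∀ u : TripleIndex (n+1),
      u.1 ≠ ({i.castSucc, j.castSucc, k.castSucc} : Finset (Fin (n+1))) →
      w (PresentedGroup.of u) = 1 := by
    intro u hu
    have h1 : gn3Word [u] = PresentedGroup.of u := by simp [gn3Word]
    rw [← h1, hw]
    simp [wWord, wRec, hu]
  -- σ-generators are killed by w ∘ π
  have hsig : ∀ q : SGen n, (sigTriple q).1 ≠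
      ({i.castSucc, j.castSucc, k.castSucc} : Finset (Fin (n+1))) := by
    intro q he
    have hl : Fin.last n ∈ (sigTriple q).1 := by simp [sigTriple]
    rw [he] at hl
    simp only [Finset.mem_insert, Finset.mem_singleton] at hl
    rcases hl with h|h|h <;> exact (Fin.castSucc_lt_last _).ne h.symm
  have hcast : ∀ u : TripleIndex n,
      (castTriple u).1 = ({i.castSucc, j.castSucc, k.castSucc} : Finset (Fin (n+1))) →
      u.1 = ({i, j, k} : Finset (Fin n)) := by
    intro u hu
    have h2 : ({i.castSucc, j.castSucc, k.castSucc} : Finset (Fin (n+1))) =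
        ({i, j, k} : Finset (Fin n)).map ⟨Fin.castSucc, Fin.castSucc_injective n⟩ := by
      simp [Finset.map_insert, Finset.map_singleton]
    have hu' : u.1.map ⟨Fin.castSucc, Fin.castSucc_injective n⟩ =
        ({i, j, k} : Finset (Fin n)).map ⟨Fin.castSucc, Fin.castSucc_injective n⟩ := by
      rw [← h2]; exact hu
    exact Finset.map_injective _ hu'
  -- the statement on generators
  have key : ∀ p : PBGen n,
      w (π (φt (PresentedGroup.of p))) = w (π (φt (f (PresentedGroup.of p)))) := by
    intro p
    obtain ⟨⟨s, t⟩, hst⟩ := p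
    rw [hf]
    unfold fijkGen
    by_cases hc : ((({s, t} : Finset (Fin n)) ∩ {i, j, k}).card = 2)
    · rw [if_pos hc]
    · rw [if_neg hc, map_one, map_one, map_one, hφt]
      have hnotboth : ¬ (s ∈ ({i, j, k} : Finset (Fin n)) ∧
          t ∈ ({i, j, k} : Finset (Fin n))) := by
        rintro ⟨hs1, ht1⟩
        apply hc
        have hsub : ({s, t} : Finset (Fin n)) ⊆ {i, j, k} := by
          intro x hx
          simp only [Finset.mem_insert, Finset.mem_singleton] at hx
          rcases hx with rfl | rfl
          · exact hs1
          · exact ht1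
        rw [Finset.inter_eq_left.mpr hsub,
          Finset.card_insert_of_notMem (by simp [hst.ne]), Finset.card_singleton]
      unfold tphiGen
      rw [map_tphiWord π, map_tphiWord w]
      set Fa : TripleIndex n → Fn3 (n+1) i.castSucc j.castSucc k.castSucc :=
        ⇑w ∘ ⇑π ∘ (fun t' => PresentedGroup.of (Sum.inl t')) with hFadef
      set Fs : SGen n → Fn3 (n+1) i.castSucc j.castSucc k.castSucc :=
        ⇑w ∘ ⇑π ∘ (fun q => PresentedGroup.of (Sum.inr q)) with hFsdef
      have hFs : ∀ q : SGen n, Fs q = 1 := by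
        intro q
        show w (π (PresentedGroup.of (Sum.inr q))) = 1
        rw [hπ]
        exact hwof _ (hsig q)
      have hFaST : ∀ l : Fin n, atri Fa s t l = 1 := by
        intro l
        unfold atri
        split
        case isTrue h =>
          show w (π (PresentedGroup.of (Sum.inl ⟨{s, t, l}, h⟩))) = 1
          rw [hπ]
          refine hwof _ (fun he => hnotboth ?_)
          have h3 : ({s, t, l} : Finset (Fin n)) = {i, j, k} := hcast ⟨{s, t, l}, h⟩ he
          constructor
          · rw [← h3]; simp
          · rw [← h3]; simp
        case isFalse h => rfl
      have hsgen1 : ∀ a b : Fin n, sgen Fs a b = 1 := by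
        intro a b
        unfold sgen
        split
        · exact hFs _
        · rfl
      have hcmid : ∀ σ : Fn3 (n+1) i.castSucc j.castSucc k.castSucc,
          σ = 1 → cMid Fa σ s t = 1 := by
        intro σ hσ
        unfold cMid
        rw [hσ, listUp_eq_one hFaST, listLow_eq_one hFaST, mul_one, mul_one]
      unfold tphiWord
      rw [hcmid _ (hsgen1 s t), hcmid _ (hsgen1 t s), mul_one, mul_one,
        mul_inv_cancel]
  have hext : w.comp (π.comp φt) = (w.comp (π.comp φt)).comp f :=
    PresentedGroup.ext fun p => key p
  exact DFunLike.congr_fun hext β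
end

section
/- Let A, B, C be words in the generators b_{st}^{±1} of PB_n, and let i < j. Suppose there exists k ∉ {i,j} such that the total number of occurrences in B of generators (with either exponent ±1) on the strand pairs {i,k} and {j,k} is odd, and B contains no occurrence of b_{ij}^{±1}. Then the generators b_{ij} and b_{ij}^{-1} in the word A b_{ij} B b_{ij}^{-1} C cannot be cancelled by the relations of PB_n; in particular, the elements of PB_n represented by the words A b_{ij} B b_{ij}^{-1} C and A B C are distinct. -/
/-- A word in the generators `b_{st}^{±1}`: a list of generators with signs. -/
abbrev PBWord (n : ℕ) := List (PBGen n × Bool)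

/-- The element of `PB_n` represented by a signed word. -/
def pbWordProd {n : ℕ} (L : PBWord n) : PBn n :=
  (L.map fun g => if g.2 then (PresentedGroup.of g.1 : PBn n)
    else (PresentedGroup.of g.1)⁻¹).prod

set_option maxRecDepth 100000

/-! ### Auxiliary machinery for the proof of `non_cancellable` -/

abbrev G4 := Equiv.Perm (Fin 4)

def pa : G4 := Equiv.swap 2 3
def pb : G4 := Equiv.swap 0 1
def pc : G4 := Equiv.swap 0 2 * Equiv.swap 1 3
def pd : G4 := Equiv.swap 0 2 * Equiv.swap 2 1 * Equiv.swap 1 3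

/-- The table of images of the generators, depending on the pattern of the pair. -/
def tab (x y z : G4) (a b : Fin 4) : G4 :=
  if (a = 0 ∧ b = 1) ∨ (a = 1 ∧ b = 0) then x
  else if (a = 0 ∧ b = 2) ∨ (a = 2 ∧ b = 0) then y
  else if (a = 1 ∧ b = 2) ∨ (a = 2 ∧ b = 1) then z
  else 1

lemma tab01 (x y z : G4) : tab x y z 0 1 = x := rfl
lemma tab10 (x y z : G4) : tab x y z 1 0 = x := rfl
lemma tab02 (x y z : G4) : tab x y z 0 2 = y := rfl
lemma tab20 (x y z : G4) : tab x y z 2 0 = y := rfl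
lemma tab12 (x y z : G4) : tab x y z 1 2 = z := rfl
lemma tab21 (x y z : G4) : tab x y z 2 1 = z := rfl

/-- Classify an index relative to `i`, `j`, `k`. -/
def cmap {n : ℕ} (i j k u : Fin n) : Fin 4 :=
  if u = i then 0 else if u = j then 1 else if u = k then 2 else 3

lemma cmap_eq0 {n : ℕ} {i j k u : Fin n} (h : cmap i j k u = 0) : u = i := by
  unfold cmap at h; split_ifs at h <;> first | assumption | exact absurd h (by decide)

lemma cmap_eq1 {n : ℕ} {i j k u : Fin n} (h : cmap i j k u = 1) : u = j := by
  unfold cmap at h; split_ifs at h <;> first | assumption | exact absurd h (by decide)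

lemma cmap_eq2 {n : ℕ} {i j k u : Fin n} (h : cmap i j k u = 2) : u = k := by
  unfold cmap at h; split_ifs at h <;> first | assumption | exact absurd h (by decide)

lemma cmap_i {n : ℕ} (i j k : Fin n) : cmap i j k i = 0 := by simp [cmap]

lemma cmap_j {n : ℕ} {i j : Fin n} (k : Fin n) (hji : j ≠ i) : cmap i j k j = 1 := by
  simp [cmap, hji]

lemma cmap_k {n : ℕ} {i j k : Fin n} (hki : k ≠ i) (hkj : k ≠ j) : cmap i j k k = 2 := by
  simp [cmap, hki, hkj]

/-- "Possible order" of two patterns, relative to a rank function `ρ`. -/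
abbrev POrd (ρ : Fin 4 → Fin 4) (a b : Fin 4) : Prop := a = 3 ∨ b = 3 ∨ ρ a < ρ b

/-- The (decidable) statement that the table respects all pure braid relators whose index
patterns are compatible with the rank function `ρ`. -/
def RelHyp (x y z : G4) (ρ : Fin 4 → Fin 4) : Prop :=
  (∀ p1 p2 p3 p4 : Fin 4, POrd ρ p1 p2 → POrd ρ p3 p4 →
     ((POrd ρ p4 p1 ∧ POrd ρ p3 p1 ∧ POrd ρ p4 p2 ∧ POrd ρ p3 p2) ∨
      (POrd ρ p2 p3 ∧ POrd ρ p1 p3 ∧ POrd ρ p2 p4 ∧ POrd ρ p1 p4)) →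
     tab x y z p3 p4 * tab x y z p1 p2 * (tab x y z p3 p4)⁻¹ * (tab x y z p1 p2)⁻¹ = 1) ∧
  (∀ p1 p2 p4 : Fin 4, POrd ρ p1 p2 → POrd ρ p2 p4 → POrd ρ p1 p4 →
     tab x y z p2 p4 * tab x y z p1 p2 * (tab x y z p2 p4)⁻¹ *
       ((tab x y z p1 p4)⁻¹ * tab x y z p1 p2 * tab x y z p1 p4)⁻¹ = 1) ∧
  (∀ p1 p3 p2 : Fin 4, POrd ρ p1 p3 → POrd ρ p3 p2 → POrd ρ p1 p2 →
     tab x y z p3 p2 * tab x y z p1 p2 * (tab x y z p3 p2)⁻¹ *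
       ((tab x y z p1 p2)⁻¹ * (tab x y z p1 p3)⁻¹ * tab x y z p1 p2 * tab x y z p1 p3 *
         tab x y z p1 p2)⁻¹ = 1) ∧
  (∀ p1 p3 p2 p4 : Fin 4, POrd ρ p1 p3 → POrd ρ p3 p2 → POrd ρ p2 p4 →
     POrd ρ p1 p2 → POrd ρ p3 p4 → POrd ρ p1 p4 →
     tab x y z p3 p4 * tab x y z p1 p2 * (tab x y z p3 p4)⁻¹ *
       ((tab x y z p1 p4)⁻¹ * (tab x y z p1 p3)⁻¹ * tab x y z p1 p4 * tab x y z p1 p3 *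
         tab x y z p1 p2 * (tab x y z p1 p3)⁻¹ * (tab x y z p1 p4)⁻¹ * tab x y z p1 p3 *
         tab x y z p1 p4)⁻¹ = 1)

/-- The (decidable) parity bookkeeping data. -/
def EOHyp (x y z : G4) (E O : Finset G4) : Prop :=
  (1 : G4) ∈ E ∧
  (∀ h ∈ ({y, y⁻¹, z, z⁻¹} : Finset G4), ∀ b ∈ E, h * b ∈ O) ∧
  (∀ h ∈ ({y, y⁻¹, z, z⁻¹} : Finset G4), ∀ b ∈ O, h * b ∈ E) ∧
  (∀ b ∈ O, x * b ≠ b * x)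

def ρ1 : Fin 4 → Fin 4 := id
def ρ2 : Fin 4 → Fin 4 := ![1, 2, 0, 3]
def ρ3 : Fin 4 → Fin 4 := ![0, 2, 1, 3]

/-- The map on pure braid generators. -/
def fmap {n : ℕ} (x y z : G4) (i j k : Fin n) : PBGen n → G4 :=
  fun p => tab x y z (cmap i j k p.1.1) (cmap i j k p.1.2)

lemma bgen_pos {n : ℕ} {G : Type*} [Group G] (f : PBGen n → G) {a b : Fin n} (h : a < b) :
    bgen f a b = f ⟨(a, b), h⟩ := dif_pos h

lemma lift_pbB {n : ℕ} {G : Type*} [Group G] (f : PBGen n → G) (a b : Fin n) :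
    FreeGroup.lift f (pbB a b) = bgen f a b := by
  unfold pbB bgen
  by_cases h : a < b
  · rw [dif_pos h, dif_pos h, FreeGroup.lift_apply_of]
  · rw [dif_neg h, dif_neg h, map_one]

lemma pair_cases {α : Type*} [DecidableEq α] {a b c d : α}
    (h : ({a, b} : Finset α) = {c, d}) : (a = c ∧ b = d) ∨ (a = d ∧ b = c) := by
  have h2 := congrArg (fun s : Finset α => (s : Set α)) h
  simp only [Finset.coe_insert, Finset.coe_singleton] at h2
  exact Set.pair_eq_pair_iff.mp h2

/-- The main working lemma. -/
lemma main_noncancel {n : ℕ} (i j k : Fin n) (hij : i < j) (hki : k ≠ i) (hkj : k ≠ j)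
    (x y z : G4) (ρ : Fin 4 → Fin 4) (E O : Finset G4)
    (horder : ∀ u v : Fin n, u < v → POrd ρ (cmap i j k u) (cmap i j k v))
    (hrel : RelHyp x y z ρ) (heo : EOHyp x y z E O)
    (A B C : PBWord n)
    (hodd : Odd (B.countP fun w => decide
        (({w.1.1.1, w.1.1.2} : Finset (Fin n)) = {i, k} ∨
          ({w.1.1.1, w.1.1.2} : Finset (Fin n)) = {j, k})))
    (hno : B.countP (fun w => decide
        (({w.1.1.1, w.1.1.2} : Finset (Fin n)) = {i, j})) = 0) :
    pbWordProd A * PresentedGroup.of ⟨(i, j), hij⟩ * pbWordProd B *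
        (PresentedGroup.of ⟨(i, j), hij⟩)⁻¹ * pbWordProd C ≠
      pbWordProd A * pbWordProd B * pbWordProd C := by
  obtain ⟨hr1, hr2, hr3, hr4⟩ := hrel
  obtain ⟨he1, heO, heE, hne⟩ := heo
  have hlift : ∀ r ∈ PBRels n, FreeGroup.lift (fmap x y z i j k) r = 1 := by
    rintro r ⟨i', j', r', s', hij', hrs', hc⟩
    rcases hc with ⟨hord, rfl⟩ | ⟨hjr, rfl⟩ | ⟨⟨hir, hjs⟩, rfl⟩ | ⟨⟨h1, h2, h3⟩, rfl⟩
    · simp only [map_mul, map_inv, lift_pbB, bgen_pos _ hij', bgen_pos _ hrs']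
      refine hr1 _ _ _ _ (horder _ _ hij') (horder _ _ hrs') ?_
      rcases hord with h | h
      · exact Or.inl ⟨horder _ _ h, horder _ _ (hrs'.trans h), horder _ _ (h.trans hij'),
          horder _ _ ((hrs'.trans h).trans hij')⟩
      · exact Or.inr ⟨horder _ _ h, horder _ _ (hij'.trans h), horder _ _ (h.trans hrs'),
          horder _ _ ((hij'.trans h).trans hrs')⟩
    · subst hjr
      simp only [map_mul, map_inv, lift_pbB, bgen_pos _ hij', bgen_pos _ hrs',
        bgen_pos _ (hij'.trans hrs')]
      exact hr2 _ _ _ (horder _ _ hij') (horder _ _ hrs') (horder _ _ (hij'.trans hrs'))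
    · subst hjs
      simp only [map_mul, map_inv, lift_pbB, bgen_pos _ hij', bgen_pos _ hrs', bgen_pos _ hir]
      exact hr3 _ _ _ (horder _ _ hir) (horder _ _ hrs') (horder _ _ hij')
    · simp only [map_mul, map_inv, lift_pbB, bgen_pos _ hij', bgen_pos _ hrs',
        bgen_pos _ h1, bgen_pos _ (hij'.trans h3)]
      exact hr4 _ _ _ _ (horder _ _ h1) (horder _ _ h2) (horder _ _ h3)
        (horder _ _ hij') (horder _ _ hrs') (horder _ _ (hij'.trans h3))
  set ψ : PBn n →* G4 := PresentedGroup.toGroup hlift with hψ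
  have hψof : ∀ p : PBGen n, ψ (PresentedGroup.of p) = fmap x y z i j k p :=
    fun p => PresentedGroup.toGroup.of hlift
  have hψprod : ∀ L : PBWord n, ψ (pbWordProd L) =
      (L.map fun g => if g.2 then fmap x y z i j k g.1
        else (fmap x y z i j k g.1)⁻¹).prod := by
    intro L
    induction L with
    | nil => simp [pbWordProd]
    | cons g L ih =>
      simp only [pbWordProd, List.map_cons, List.prod_cons, map_mul] at ih ⊢
      rw [ih]
      congr 1
      by_cases hb : g.2 <;> simp [hb, map_inv, hψof]
  have key : ∀ L : PBWord n,
      (L.countP (fun w => decide (({w.1.1.1, w.1.1.2} : Finset (Fin n)) = {i, j}))) = 0 →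
      ((L.map fun g => if g.2 then fmap x y z i j k g.1
          else (fmap x y z i j k g.1)⁻¹).prod ∈
        (if Even (L.countP fun w => decide
            (({w.1.1.1, w.1.1.2} : Finset (Fin n)) = {i, k} ∨
              ({w.1.1.1, w.1.1.2} : Finset (Fin n)) = {j, k})) then E else O)) := by
    intro L
    induction L with
    | nil => intro _; simpa using he1
    | cons g L ih =>
      intro h0
      rw [List.countP_cons] at h0
      have hgij : ¬ (({g.1.1.1, g.1.1.2} : Finset (Fin n)) = {i, j}) := by
        intro h
        simp [h] at h0
      have ht : L.countP
          (fun w => decide (({w.1.1.1, w.1.1.2} : Finset (Fin n)) = {i, j})) = 0 :=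
        Nat.eq_zero_of_add_eq_zero_right h0
      rw [List.countP_cons, List.map_cons, List.prod_cons]
      have hrest := ih ht
      by_cases hs : (({g.1.1.1, g.1.1.2} : Finset (Fin n)) = {i, k} ∨
          ({g.1.1.1, g.1.1.2} : Finset (Fin n)) = {j, k})
      · have hyz : fmap x y z i j k g.1 = y ∨ fmap x y z i j k g.1 = z := by
          rcases hs with h | h
          · left
            rcases pair_cases h with ⟨ha, hb⟩ | ⟨ha, hb⟩
            · show tab x y z (cmap i j k g.1.1.1) (cmap i j k g.1.1.2) = y
              rw [ha, hb, cmap_i, cmap_k hki hkj, tab02]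
            · show tab x y z (cmap i j k g.1.1.1) (cmap i j k g.1.1.2) = y
              rw [ha, hb, cmap_i, cmap_k hki hkj, tab20]
          · right
            rcases pair_cases h with ⟨ha, hb⟩ | ⟨ha, hb⟩
            · show tab x y z (cmap i j k g.1.1.1) (cmap i j k g.1.1.2) = z
              rw [ha, hb, cmap_j k hij.ne', cmap_k hki hkj, tab12]
            · show tab x y z (cmap i j k g.1.1.1) (cmap i j k g.1.1.2) = z
              rw [ha, hb, cmap_j k hij.ne', cmap_k hki hkj, tab21]
        have hmem : (if g.2 then fmap x y z i j k g.1 else (fmap x y z i j k g.1)⁻¹) ∈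
            ({y, y⁻¹, z, z⁻¹} : Finset G4) := by
          rcases hyz with h | h <;> by_cases hb : g.2 <;> simp [hb, h]
        have hpg : (decide (({g.1.1.1, g.1.1.2} : Finset (Fin n)) = {i, k} ∨
            ({g.1.1.1, g.1.1.2} : Finset (Fin n)) = {j, k})) = true := decide_eq_true hs
        rw [hpg, if_pos rfl]
        rcases Nat.even_or_odd (L.countP fun w => decide
            (({w.1.1.1, w.1.1.2} : Finset (Fin n)) = {i, k} ∨
              ({w.1.1.1, w.1.1.2} : Finset (Fin n)) = {j, k})) with hev | hod
        · rw [if_neg (fun hcon => (Nat.even_add_one.mp hcon) hev)]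
          rw [if_pos hev] at hrest
          exact heO _ hmem _ hrest
        · have hnev := Nat.not_even_iff_odd.mpr hod
          rw [if_pos (Nat.even_add_one.mpr hnev)]
          rw [if_neg hnev] at hrest
          exact heE _ hmem _ hrest
      · have hone : fmap x y z i j k g.1 = 1 := by
          show tab x y z (cmap i j k g.1.1.1) (cmap i j k g.1.1.2) = 1
          unfold tab
          split_ifs with c1 c2 c3
          · exfalso; apply hgij
            rcases c1 with ⟨ha, hb⟩ | ⟨ha, hb⟩
            · rw [cmap_eq0 ha, cmap_eq1 hb]
            · rw [cmap_eq1 ha, cmap_eq0 hb, Finset.pair_comm]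
          · exfalso; apply hs; left
            rcases c2 with ⟨ha, hb⟩ | ⟨ha, hb⟩
            · rw [cmap_eq0 ha, cmap_eq2 hb]
            · rw [cmap_eq2 ha, cmap_eq0 hb, Finset.pair_comm]
          · exfalso; apply hs; right
            rcases c3 with ⟨ha, hb⟩ | ⟨ha, hb⟩
            · rw [cmap_eq1 ha, cmap_eq2 hb]
            · rw [cmap_eq2 ha, cmap_eq1 hb, Finset.pair_comm]
          · rfl
        have hid : (if g.2 then fmap x y z i j k g.1 else (fmap x y z i j k g.1)⁻¹) = 1 := by
          by_cases hb : g.2 <;> simp [hb, hone]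
        have hpg : (decide (({g.1.1.1, g.1.1.2} : Finset (Fin n)) = {i, k} ∨
            ({g.1.1.1, g.1.1.2} : Finset (Fin n)) = {j, k})) = false := decide_eq_false hs
        rw [hpg]
        simp only [Bool.false_eq_true, if_false, add_zero]
        rw [hid, one_mul]
        exact hrest
  intro heq
  have h2 := congrArg ψ heq
  simp only [map_mul, map_inv] at h2
  have h3 := mul_right_cancel h2
  have h4 : ψ (pbWordProd A) *
      (ψ (PresentedGroup.of ⟨(i, j), hij⟩) * ψ (pbWordProd B) *
        (ψ (PresentedGroup.of ⟨(i, j), hij⟩))⁻¹) = ψ (pbWordProd A) * ψ (pbWordProd B) := by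
    rw [← h3]; group
  have h5 := mul_left_cancel h4
  have h6 : ψ (PresentedGroup.of ⟨(i, j), hij⟩) * ψ (pbWordProd B) =
      ψ (pbWordProd B) * ψ (PresentedGroup.of ⟨(i, j), hij⟩) := by
    have h7 := congrArg (· * ψ (PresentedGroup.of ⟨(i, j), hij⟩)) h5
    simpa using h7
  have hXx : ψ (PresentedGroup.of ⟨(i, j), hij⟩) = x := by
    rw [hψof]
    show tab x y z (cmap i j k i) (cmap i j k j) = x
    rw [cmap_i, cmap_j k hij.ne', tab01]
  have hWO : ψ (pbWordProd B) ∈ O := by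
    rw [hψprod B]
    have hk := key B hno
    rwa [if_neg (Nat.not_even_iff_odd.mpr hodd)] at hk
  rw [hXx] at h6
  exact hne _ hWO h6

/-- If there is `k ∉ {i,j}` such that the total number of occurrences in `B` of
generators on the strand pairs `{i,k}` and `{j,k}` is odd, and `B` contains no occurrence of
`b_{ij}^{±1}`, then the elements of `PB_n` represented by `A b_{ij} B b_{ij}^{-1} C` and `A B C`
are distinct (so `b_{ij}` and `b_{ij}^{-1}` cannot be cancelled). -/
theorem non_cancellable (n : ℕ) (i j : Fin n) (hij : i < j) (A B C : PBWord n)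
    (hodd : ∃ k : Fin n, k ≠ i ∧ k ≠ j ∧
      Odd (B.countP fun x => decide
        (({x.1.1.1, x.1.1.2} : Finset (Fin n)) = {i, k} ∨
          ({x.1.1.1, x.1.1.2} : Finset (Fin n)) = {j, k})))
    (hno : B.countP (fun x => decide
        (({x.1.1.1, x.1.1.2} : Finset (Fin n)) = {i, j})) = 0) :
    pbWordProd A * PresentedGroup.of ⟨(i, j), hij⟩ * pbWordProd B *
        (PresentedGroup.of ⟨(i, j), hij⟩)⁻¹ * pbWordProd C ≠
      pbWordProd A * pbWordProd B * pbWordProd C := by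
  obtain ⟨k, hki, hkj, hodd⟩ := hodd
  rcases lt_trichotomy j k with hjk | hjk | hjk
  · refine main_noncancel i j k hij hki hkj pa pc pd ρ1
      ({1, pa, pb, pa * pb} : Finset G4)
      (({1, pa, pb, pa * pb} : Finset G4).image (fun t => pc * t)) ?_ ?_ ?_ A B C hodd hno
    · intro u v huv
      have hv : u.val < v.val := huv
      have h1 : i.val < j.val := hij
      have h2 : j.val < k.val := hjk
      unfold cmap
      split_ifs <;> subst_vars <;> first | decide | (exfalso; omega)
    · unfold RelHyp
      exact ⟨by decide, by decide, by decide, by decide⟩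
    · unfold EOHyp
      exact ⟨by decide, by decide, by decide, by decide⟩
  · exact absurd hjk.symm hkj
  · rcases lt_trichotomy k i with hk2 | hk2 | hk2
    · refine main_noncancel i j k hij hki hkj pd pa pc ρ2
        ({1, pa * pb, pd, pd⁻¹} : Finset G4)
        (({1, pa * pb, pd, pd⁻¹} : Finset G4).image (fun t => pa * t)) ?_ ?_ ?_ A B C hodd hno
      · intro u v huv
        have hv : u.val < v.val := huv
        have h1 : i.val < j.val := hij
        have h2 : k.val < i.val := hk2
        unfold cmap
        split_ifs <;> subst_vars <;> first | decide | (exfalso; omega)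
      · unfold RelHyp
        exact ⟨by decide, by decide, by decide, by decide⟩
      · unfold EOHyp
        exact ⟨by decide, by decide, by decide, by decide⟩
    · exact absurd hk2 hki
    · refine main_noncancel i j k hij hki hkj pc pa pd ρ3
        ({1, pa * pb, pc, pa * pb * pc} : Finset G4)
        (({1, pa * pb, pc, pa * pb * pc} : Finset G4).image (fun t => pa * t))
        ?_ ?_ ?_ A B C hodd hno
      · intro u v huv
        have hv : u.val < v.val := huv
        have h1 : i.val < k.val := hk2
        have h2 : k.val < j.val := hjk
        unfold cmap
        split_ifs <;> subst_vars <;> first | decide | (exfalso; omega)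
      · unfold RelHyp
        exact ⟨by decide, by decide, by decide, by decide⟩
      · unfold EOHyp
        exact ⟨by decide, by decide, by decide, by decide⟩
end
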